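/- arXiv:2101.08871 — 2 statements merged into one kernel-verified Lean document; each statement's English description precedes it below -/
import Mathlib

section
/- Let n ≥ 1 and let μ, ν : {1,…,n} → ℝ be nonincreasing tuples with ∑_{j=1}^n ν_j = ∑_{j=1}^n μ_j. Suppose there exists 1 ≤ m < n with ∑_{j=1}^m ν_j > ∑_{j=1}^m μ_j, and let m₀ be the maximal such m. Let 1 ≤ r ≤ m₀ be an index such that ν_j = ν_{m₀+1} for all r+1 ≤ j ≤ m₀. Then ∑_{j=1}^r ν_j > ∑_{j=1}^r μ_j. -/
lemma mono_aux (n : ℕ) (μ : ℕ → ℝ) (h : ∀ j, 1 ≤ j → j < n → μ (j + 1) ≤ μ j) :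
    ∀ a b, 1 ≤ a → a ≤ b → b ≤ n → μ b ≤ μ a := by
  intro a b ha hab hbn
  induction b with
  | zero => omega
  | succ k ih =>
    rcases Nat.lt_or_ge a (k+1) with hlt | hge
    · have h1 : μ (k+1) ≤ μ k := h k (by omega) (by omega)
      exact h1.trans (ih (by omega) (by omega))
    · have : a = k + 1 := by omega
      simp [this]

/-- Existence of a P-destabilizing subbundle: combinatorial content. -/
theorem stmt5 (n : ℕ) (hn : 1 ≤ n) (μ ν : ℕ → ℝ)
    (hμ : ∀ j, 1 ≤ j → j < n → μ (j + 1) ≤ μ j)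
    (hν : ∀ j, 1 ≤ j → j < n → ν (j + 1) ≤ ν j)
    (htot : ∑ j ∈ Finset.Icc 1 n, ν j = ∑ j ∈ Finset.Icc 1 n, μ j)
    (m₀ : ℕ) (hm₀1 : 1 ≤ m₀) (hm₀n : m₀ < n)
    (hex : ∑ j ∈ Finset.Icc 1 m₀, μ j < ∑ j ∈ Finset.Icc 1 m₀, ν j)
    (hmax : ∀ m, 1 ≤ m → m < n →
      ∑ j ∈ Finset.Icc 1 m, μ j < ∑ j ∈ Finset.Icc 1 m, ν j → m ≤ m₀)
    (r : ℕ) (hr1 : 1 ≤ r) (hrm : r ≤ m₀)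
    (hconst : ∀ j, r + 1 ≤ j → j ≤ m₀ → ν j = ν (m₀ + 1)) :
    ∑ j ∈ Finset.Icc 1 r, μ j < ∑ j ∈ Finset.Icc 1 r, ν j := by
  rcases eq_or_lt_of_le hrm with rfl | hrlt
  · exact hex
  by_contra hcon
  push_neg at hcon
  set c := ν (m₀ + 1) with hc
  -- Step 1 : c < μ (m₀+1)
  have hsplit1 : ∀ f : ℕ → ℝ, ∑ j ∈ Finset.Icc 1 (m₀+1), f j
      = (∑ j ∈ Finset.Icc 1 m₀, f j) + f (m₀+1) := by
    intro f
    rw [Finset.sum_Icc_succ_top (by omega)]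
  have hcμ : c < μ (m₀ + 1) := by
    rcases eq_or_lt_of_le (Nat.succ_le_of_lt hm₀n) with heq | hlt
    · -- m₀ + 1 = n
      rw [← heq, hsplit1 ν, hsplit1 μ] at htot
      linarith
    · have hle : ¬ (∑ j ∈ Finset.Icc 1 (m₀+1), μ j < ∑ j ∈ Finset.Icc 1 (m₀+1), ν j) := by
        intro h
        have := hmax (m₀+1) (by omega) hlt h
        omega
      push_neg at hle
      rw [hsplit1 ν, hsplit1 μ] at hle
      linarith
  -- Split sums 1..m₀ = 1..r plus Ioc r m₀
  have hsplit2 : ∀ f : ℕ → ℝ, ∑ j ∈ Finset.Icc 1 m₀, f j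
      = (∑ j ∈ Finset.Icc 1 r, f j) + ∑ j ∈ Finset.Ioc r m₀, f j := by
    intro f
    rw [show Finset.Icc 1 m₀ = Finset.Ioc 0 m₀ from (Finset.Icc_add_one_left_eq_Ioc 0 m₀),
        show Finset.Icc 1 r = Finset.Ioc 0 r from (Finset.Icc_add_one_left_eq_Ioc 0 r)]
    exact (Finset.sum_Ioc_consecutive f (Nat.zero_le r) (le_of_lt hrlt)).symm
  have hνsum : ∑ j ∈ Finset.Ioc r m₀, ν j = (m₀ - r : ℕ) * c := by
    have := Finset.sum_congr rfl (fun j hj => by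
      rw [Finset.mem_Ioc] at hj
      exact hconst j (by omega) hj.2 : ∀ j ∈ Finset.Ioc r m₀, ν j = c)
    rw [this]
    simp [Nat.card_Ioc]
  have hμsum : (m₀ - r : ℕ) * μ (m₀ + 1) ≤ ∑ j ∈ Finset.Ioc r m₀, μ j := by
    calc ((m₀ - r : ℕ) : ℝ) * μ (m₀ + 1)
        = ∑ _j ∈ Finset.Ioc r m₀, μ (m₀ + 1) := by simp [Nat.card_Ioc]
      _ ≤ ∑ j ∈ Finset.Ioc r m₀, μ j := by
          apply Finset.sum_le_sum
          intro j hj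
          rw [Finset.mem_Ioc] at hj
          exact mono_aux n μ hμ j (m₀+1) (by omega) (by omega) (by omega)
  have hpos : (0 : ℝ) < (m₀ - r : ℕ) := by
    have : 0 < m₀ - r := by omega
    exact_mod_cast this
  have hkey : ((m₀ - r : ℕ) : ℝ) * c < (m₀ - r : ℕ) * μ (m₀ + 1) :=
    mul_lt_mul_of_pos_left hcμ hpos
  rw [hsplit2 ν, hsplit2 μ, hνsum] at hex
  linarith
end

section
/- Let r, s : ℤ → ℝ be finitely supported functions. Then ∑_{m∈ℤ} ∑_{l∈ℤ} (l − m)·r_m·s_l = ∑_{h∈ℤ} [ (∑_{m ≤ h} r_m)·(∑_{l > h} s_l) − (∑_{l > h} r_l)·(∑_{m ≤ h} s_m) ]. -/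
/-- Weight-regrouping identity for finitely supported `r, s : ℤ → ℝ`. -/
theorem stmt12 (r s : ℤ →₀ ℝ) :
    ∑ m ∈ r.support, ∑ l ∈ s.support, ((l - m : ℤ) : ℝ) * r m * s l =
      ∑ᶠ h : ℤ,
        ((∑ m ∈ r.support.filter (· ≤ h), r m) * (∑ l ∈ s.support.filter (h < ·), s l) -
          (∑ l ∈ r.support.filter (h < ·), r l) * (∑ m ∈ s.support.filter (· ≤ h), s m)) := by
  classical
  set A : Finset ℤ := r.support ∪ s.support with hA
  obtain ⟨b, hb⟩ := A.exists_le
  obtain ⟨c, hc⟩ := (A.image (fun x => -x)).exists_le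
  set a : ℤ := -c with ha
  have hlow : ∀ i ∈ A, a ≤ i := by
    intro i hi
    have := hc (-i) (Finset.mem_image_of_mem _ hi)
    omega
  set f : ℤ → ℝ := fun h =>
      ((∑ m ∈ r.support.filter (· ≤ h), r m) * (∑ l ∈ s.support.filter (h < ·), s l) -
        (∑ l ∈ r.support.filter (h < ·), r l) * (∑ m ∈ s.support.filter (· ≤ h), s m)) with hf
  have hsupp : ∀ h : ℤ, h ∉ Finset.Icc a b → f h = 0 := by
    intro h hh
    rw [Finset.mem_Icc] at hh
    push_neg at hh
    rcases lt_or_ge h a with h1 | h1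
    · have e1 : r.support.filter (· ≤ h) = ∅ := by
        apply Finset.filter_false_of_mem
        intro x hx
        have := hlow x (Finset.mem_union_left _ hx)
        omega
      have e2 : s.support.filter (· ≤ h) = ∅ := by
        apply Finset.filter_false_of_mem
        intro x hx
        have := hlow x (Finset.mem_union_right _ hx)
        omega
      simp [hf, e1, e2]
    · have h2 := hh h1
      have e1 : r.support.filter (h < ·) = ∅ := by
        apply Finset.filter_false_of_mem
        intro x hx
        have := hb x (Finset.mem_union_left _ hx)
        omega
      have e2 : s.support.filter (h < ·) = ∅ := by
        apply Finset.filter_false_of_mem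
        intro x hx
        have := hb x (Finset.mem_union_right _ hx)
        omega
      simp [hf, e1, e2]
  have hsub : Function.support f ⊆ (Finset.Icc a b : Set ℤ) := by
    intro h hh
    by_contra hcon
    exact hh (hsupp h (by simpa using hcon))
  rw [show (∑ᶠ h : ℤ,
        ((∑ m ∈ r.support.filter (· ≤ h), r m) * (∑ l ∈ s.support.filter (h < ·), s l) -
          (∑ l ∈ r.support.filter (h < ·), r l) * (∑ m ∈ s.support.filter (· ≤ h), s m))) =
      ∑ᶠ h : ℤ, f h from rfl,
    finsum_eq_finset_sum_of_support_subset f hsub]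
  have point : ∀ (m l h : ℤ),
      (if m ≤ h then r m else 0) * (if h < l then s l else 0)
        - (if h < m then r m else 0) * (if l ≤ h then s l else 0)
      = r m * s l * ((if h ∈ Finset.Ico m l then (1:ℝ) else 0)
          - if h ∈ Finset.Ico l m then (1:ℝ) else 0) := by
    intro m l h
    simp only [Finset.mem_Ico]
    split_ifs <;> (try (exfalso; omega)) <;> ring
  have step : ∀ h : ℤ, f h = ∑ m ∈ r.support, ∑ l ∈ s.support,
      r m * s l * ((if h ∈ Finset.Ico m l then (1:ℝ) else 0)
        - if h ∈ Finset.Ico l m then (1:ℝ) else 0) := by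
    intro h
    have t1 : (∑ m ∈ r.support.filter (· ≤ h), r m) * (∑ l ∈ s.support.filter (h < ·), s l)
        = ∑ m ∈ r.support, ∑ l ∈ s.support,
            (if m ≤ h then r m else 0) * (if h < l then s l else 0) := by
      rw [Finset.sum_filter, Finset.sum_filter, Finset.sum_mul_sum]
    have t2 : (∑ l ∈ r.support.filter (h < ·), r l) * (∑ m ∈ s.support.filter (· ≤ h), s m)
        = ∑ m ∈ r.support, ∑ l ∈ s.support,
            (if h < m then r m else 0) * (if l ≤ h then s l else 0) := by
      rw [Finset.sum_filter, Finset.sum_filter, Finset.sum_mul_sum]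
    rw [hf]
    simp only [t1, t2, ← Finset.sum_sub_distrib]
    exact Finset.sum_congr rfl fun m _ => Finset.sum_congr rfl fun l _ => point m l h
  symm
  calc ∑ h ∈ Finset.Icc a b, f h
      = ∑ h ∈ Finset.Icc a b, ∑ m ∈ r.support, ∑ l ∈ s.support,
          r m * s l * ((if h ∈ Finset.Ico m l then (1:ℝ) else 0)
            - if h ∈ Finset.Ico l m then (1:ℝ) else 0) :=
        Finset.sum_congr rfl fun h _ => step h
    _ = ∑ m ∈ r.support, ∑ l ∈ s.support, ∑ h ∈ Finset.Icc a b,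
          r m * s l * ((if h ∈ Finset.Ico m l then (1:ℝ) else 0)
            - if h ∈ Finset.Ico l m then (1:ℝ) else 0) := by
        rw [Finset.sum_comm]
        exact Finset.sum_congr rfl fun m _ => Finset.sum_comm
    _ = ∑ m ∈ r.support, ∑ l ∈ s.support, ((l - m : ℤ) : ℝ) * r m * s l := by
        apply Finset.sum_congr rfl
        intro m hm
        apply Finset.sum_congr rfl
        intro l hl
        have ham : a ≤ m := hlow m (Finset.mem_union_left _ hm)
        have hbm : m ≤ b := hb m (Finset.mem_union_left _ hm)
        have hal : a ≤ l := hlow l (Finset.mem_union_right _ hl)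
        have hbl : l ≤ b := hb l (Finset.mem_union_right _ hl)
        have hsub1 : Finset.Ico m l ⊆ Finset.Icc a b := by
          intro x hx
          rw [Finset.mem_Ico] at hx
          rw [Finset.mem_Icc]
          omega
        have hsub2 : Finset.Ico l m ⊆ Finset.Icc a b := by
          intro x hx
          rw [Finset.mem_Ico] at hx
          rw [Finset.mem_Icc]
          omega
        have c1 : (∑ h ∈ Finset.Icc a b, if h ∈ Finset.Ico m l then (1:ℝ) else 0)
            = ((l - m).toNat : ℝ) := by
          rw [Finset.sum_ite_mem, Finset.inter_eq_right.mpr hsub1, Finset.sum_const,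
            Int.card_Ico]
          simp
        have c2 : (∑ h ∈ Finset.Icc a b, if h ∈ Finset.Ico l m then (1:ℝ) else 0)
            = ((m - l).toNat : ℝ) := by
          rw [Finset.sum_ite_mem, Finset.inter_eq_right.mpr hsub2, Finset.sum_const,
            Int.card_Ico]
          simp
        have key2 : ((l - m).toNat : ℝ) - ((m - l).toNat : ℝ) = ((l - m : ℤ) : ℝ) := by
          have h2 : ((l - m).toNat : ℤ) - ((m - l).toNat : ℤ) = l - m := by omega
          exact_mod_cast congrArg (Int.cast : ℤ → ℝ) h2
        rw [← Finset.mul_sum, Finset.sum_sub_distrib, c1, c2, key2]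
        ring
end
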